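/- Let 0 < r₁ ≤ r₂ and consider the MMSM instance with barrier [0, 2r₁ + 2r₂] × {0} and two sensors both located at (r₁ + r₂, 0), sensor 1 with radius r₁ and sensor 2 with radius r₂. Then for D = r₁ a fractional cover exists: there are Lebesgue-measurable sets A₁ ⊆ [r₂ − r₁, r₂ + 3r₁] and A₂ ⊆ [0, 2r₁ + 2r₂] with Lebesgue measures at most 2r₁ and 2r₂ respectively whose union is [0, 2r₁ + 2r₂]; yet every relocation that covers the barrier has some sensor with movement at least r₂. In particular the gap between the minimum maximum movement and the least D admitting a fractional cover is at least r₂ − r₁. -/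

import Mathlib

/-!
Both sensors sit at the midpoint `r₁ + r₂` of the barrier `[0, 2r₁ + 2r₂]`. A fractional cover may
split the share of sensor 2 into the two end pieces `[0, r₂ - r₁]` and `[r₂ + r₁, 2r₁ + 2r₂]` while
sensor 1 takes the middle, and this needs movement only `r₁`. A genuine relocation cannot split a
sensor: sensor 2 is too short to reach both endpoints of the barrier, so sensor 1 covers one of
them and moves at least `r₂`. Placing sensor 1 at `r₁` and sensor 2 at `2r₁ + r₂` attains `r₂`.
-/

open MeasureTheory

/-- Leftmost point of the barrier coverable by a sensor at `(x, y)` with radius `r`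
under movement bound `D`. -/
noncomputable def lpos (x y r D : ℝ) : ℝ := x - Real.sqrt (D ^ 2 - y ^ 2) - r

/-- Rightmost point of the barrier coverable by a sensor at `(x, y)` with radius `r`
under movement bound `D`. -/
noncomputable def gpos (x y r D : ℝ) : ℝ := x + Real.sqrt (D ^ 2 - y ^ 2) + r

/-- The MMSM instance with sensors at `(x i, y i)` of radii `r i` and barrier `[0, M]`
is feasible with respect to movement bound `D`. -/
def Feasible {n : ℕ} (x y r : Fin n → ℝ) (M D : ℝ) : Prop :=
  ∃ (T : Finset (Fin n)) (p : Fin n → ℝ),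
    (∀ i ∈ T, Real.sqrt ((x i - p i) ^ 2 + (y i) ^ 2) ≤ D) ∧
    ∀ q ∈ Set.Icc (0 : ℝ) M, ∃ i ∈ T, |q - p i| ≤ r i

/-- A fractional cover with respect to `D`: for each sensor `i` with `|yᵢ| ≤ D`, a
measurable set `Aᵢ ⊆ [lᵢ(D), gᵢ(D)] ∩ [0, M]` of measure at most `2rᵢ`, the union of
which covers `[0, M]`. -/
def FracCover {n : ℕ} (x y r : Fin n → ℝ) (M D : ℝ) : Prop :=
  ∃ A : Fin n → Set ℝ,
    (∀ i, |y i| ≤ D →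
      MeasurableSet (A i) ∧
      A i ⊆ Set.Icc (lpos (x i) (y i) (r i) D) (gpos (x i) (y i) (r i) D) ∩
        Set.Icc (0 : ℝ) M ∧
      volume (A i) ≤ ENNReal.ofReal (2 * r i)) ∧
    Set.Icc (0 : ℝ) M ⊆ ⋃ i, ⋃ (_ : |y i| ≤ D), A i

open Set

theorem lpos_of_y_eq_zero (x r : ℝ) {D : ℝ} (hD : 0 ≤ D) : lpos x 0 r D = x - D - r := by
  simp [lpos, Real.sqrt_sq hD]

theorem gpos_of_y_eq_zero (x r : ℝ) {D : ℝ} (hD : 0 ≤ D) : gpos x 0 r D = x + D + r := by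
  simp [gpos, Real.sqrt_sq hD]

section AxisSensors

variable {n : ℕ} {x y r : Fin n → ℝ} {M D : ℝ}

theorem fracCover_of_y_eq_zero (hy : ∀ i, y i = 0) (hD : 0 ≤ D) (A : Fin n → Set ℝ)
    (hA : ∀ i, MeasurableSet (A i) ∧ A i ⊆ Icc (x i - D - r i) (x i + D + r i) ∩ Icc 0 M ∧
      volume (A i) ≤ ENNReal.ofReal (2 * r i))
    (hcov : Icc 0 M ⊆ ⋃ i, A i) :
    FracCover x y r M D := by
  refine ⟨A, fun i _ ↦ ?_, fun q hq ↦ ?_⟩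
  · rw [hy i, lpos_of_y_eq_zero _ _ hD, gpos_of_y_eq_zero _ _ hD]
    exact hA i
  · obtain ⟨i, hi⟩ := mem_iUnion.1 (hcov hq)
    exact mem_iUnion₂.2 ⟨i, by simpa [hy i] using hD, hi⟩

theorem Feasible.le_of_forall_covers {L : ℝ}
    (h : ∀ (T : Finset (Fin n)) (p : Fin n → ℝ),
      (∀ q ∈ Icc 0 M, ∃ i ∈ T, |q - p i| ≤ r i) → ∃ i ∈ T, L ≤ √((x i - p i) ^ 2 + y i ^ 2))
    (hD : Feasible x y r M D) : L ≤ D := by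
  obtain ⟨T, p, hmove, hcov⟩ := hD
  obtain ⟨i, hiT, hi⟩ := h T p hcov
  exact hi.trans (hmove i hiT)

end AxisSensors

theorem Icc_union_Icc_union_Icc_eq_Icc {a b c d : ℝ} (hab : a ≤ b) (hbc : b ≤ c) (hcd : c ≤ d) :
    Icc b c ∪ (Icc a b ∪ Icc c d) = Icc a d := by
  rw [union_left_comm, Icc_union_Icc_eq_Icc hbc hcd, Icc_union_Icc_eq_Icc hab (hbc.trans hcd)]

theorem volume_Icc_union_Icc_le {a b c d : ℝ} (hab : a ≤ b) (hcd : c ≤ d) :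
    volume (Icc a b ∪ Icc c d) ≤ ENNReal.ofReal (b - a + (d - c)) := by
  rw [ENNReal.ofReal_add (sub_nonneg.2 hab) (sub_nonneg.2 hcd), ← Real.volume_Icc,
    ← Real.volume_Icc]
  exact measure_union_le _ _

section TwoSensors

variable {r₁ r₂ : ℝ}

def innerPart (r₁ r₂ : ℝ) : Set ℝ := Icc (r₂ - r₁) (r₂ + r₁)

def outerPart (r₁ r₂ : ℝ) : Set ℝ := Icc 0 (r₂ - r₁) ∪ Icc (r₂ + r₁) (2 * r₁ + 2 * r₂)

theorem innerPart_union_outerPart (h1 : 0 < r₁) (h12 : r₁ ≤ r₂) :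
    innerPart r₁ r₂ ∪ outerPart r₁ r₂ = Icc 0 (2 * r₁ + 2 * r₂) :=
  Icc_union_Icc_union_Icc_eq_Icc (by linarith) (by linarith) (by linarith)

theorem volume_innerPart : volume (innerPart r₁ r₂) ≤ ENNReal.ofReal (2 * r₁) := by
  rw [innerPart, Real.volume_Icc, show r₂ + r₁ - (r₂ - r₁) = 2 * r₁ by ring]

theorem volume_outerPart (h1 : 0 < r₁) (h12 : r₁ ≤ r₂) :
    volume (outerPart r₁ r₂) ≤ ENNReal.ofReal (2 * r₂) :=
  (volume_Icc_union_Icc_le (by linarith) (by linarith)).trans_eq (by ring_nf)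

theorem movement_eq_abs (c : ℝ) (p : Fin 2 → ℝ) (i : Fin 2) :
    √((![c, c] i - p i) ^ 2 + ![(0 : ℝ), 0] i ^ 2) = |c - p i| := by
  simp [Matrix.vec_single_eq_const, Matrix.vecCons_const, Real.sqrt_sq_eq_abs]

theorem fracCover_innerPart_outerPart (h1 : 0 < r₁) (h12 : r₁ ≤ r₂) :
    FracCover ![r₁ + r₂, r₁ + r₂] ![0, 0] ![r₁, r₂] (2 * r₁ + 2 * r₂) r₁ := by
  refine fracCover_of_y_eq_zero (by simp) h1.le ![innerPart r₁ r₂, outerPart r₁ r₂]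
    (fun i ↦ ?_) ?_
  · fin_cases i
    · refine ⟨measurableSet_Icc, fun t ht ↦ ?_, volume_innerPart⟩
      simp only [innerPart, Fin.zero_eta, Matrix.cons_val_zero, mem_Icc] at ht ⊢
      refine ⟨⟨?_, ?_⟩, ?_, ?_⟩ <;> linarith
    · refine ⟨measurableSet_Icc.union measurableSet_Icc, fun t ht ↦ ?_, volume_outerPart h1 h12⟩
      simp only [outerPart, Fin.mk_one, Matrix.cons_val_one, Matrix.cons_val_zero, mem_union,
        mem_Icc] at ht ⊢
      rcases ht with ht | ht <;> refine ⟨⟨?_, ?_⟩, ?_, ?_⟩ <;> linarith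
  · rw [← innerPart_union_outerPart h1 h12]
    rintro t (ht | ht)
    exacts [mem_iUnion_of_mem 0 ht, mem_iUnion_of_mem 1 ht]

theorem feasible_two_sensors (h1 : 0 < r₁) (h12 : r₁ ≤ r₂) :
    Feasible ![r₁ + r₂, r₁ + r₂] ![0, 0] ![r₁, r₂] (2 * r₁ + 2 * r₂) r₂ := by
  refine ⟨Finset.univ, ![r₁, 2 * r₁ + r₂], fun i _ ↦ ?_, fun q hq ↦ ?_⟩
  · rw [movement_eq_abs]
    fin_cases i <;> simp only [Fin.zero_eta, Fin.mk_one, Matrix.cons_val_zero,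
      Matrix.cons_val_one] <;> rw [abs_le] <;> constructor <;> linarith
  · rcases le_total q (2 * r₁) with hq₁ | hq₁
    · exact ⟨0, Finset.mem_univ _,
        show |q - r₁| ≤ r₁ from abs_le.2 ⟨by linarith [hq.1], by linarith⟩⟩
    · exact ⟨1, Finset.mem_univ _,
        show |q - (2 * r₁ + r₂)| ≤ r₂ from abs_le.2 ⟨by linarith, by linarith [hq.2]⟩⟩

theorem exists_movement_ge_of_covers (h1 : 0 < r₁) (h12 : r₁ ≤ r₂) (T : Finset (Fin 2))
    (p : Fin 2 → ℝ) (hcov : ∀ q ∈ Icc 0 (2 * r₁ + 2 * r₂), ∃ i ∈ T, |q - p i| ≤ ![r₁, r₂] i) :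
    ∃ i ∈ T, r₂ ≤ √((![r₁ + r₂, r₁ + r₂] i - p i) ^ 2 + ![(0 : ℝ), 0] i ^ 2) := by
  simp only [movement_eq_abs]
  obtain ⟨i, hiT, hi⟩ := hcov 0 ⟨le_rfl, by linarith⟩
  obtain ⟨j, hjT, hj⟩ := hcov (2 * r₁ + 2 * r₂) ⟨by linarith, le_rfl⟩
  fin_cases i
  · change |0 - p 0| ≤ r₁ at hi
    exact ⟨0, hiT, le_trans (by linarith [abs_le.1 hi]) (le_abs_self _)⟩
  fin_cases j
  · change |2 * r₁ + 2 * r₂ - p 0| ≤ r₁ at hj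
    exact ⟨0, hjT, le_trans (by linarith [abs_le.1 hj]) (neg_le_abs _)⟩
  -- sensor 2 alone cannot cover both ends, which are `2 * r₁ + 2 * r₂ > 2 * r₂` apart
  change |0 - p 1| ≤ r₂ at hi
  change |2 * r₁ + 2 * r₂ - p 1| ≤ r₂ at hj
  linarith [abs_le.1 hi, abs_le.1 hj]

end TwoSensors

/-- For `0 < r₁ ≤ r₂` and the instance with barrier `[0, 2r₁ + 2r₂]` and two sensors
both at `(r₁ + r₂, 0)` of radii `r₁, r₂`: for `D = r₁` a fractional cover exists
(with `A₁ ⊆ [r₂ - r₁, r₂ + 3r₁]`, `A₂ ⊆ [0, 2r₁ + 2r₂]`, of measures at most `2r₁`,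
`2r₂`, whose union is `[0, 2r₁ + 2r₂]`), yet every covering relocation moves some sensor
at least `r₂`; in particular the gap between the minimum maximum movement and the least
`D` admitting a fractional cover is at least `r₂ - r₁`. -/
theorem stmt_9 (r₁ r₂ : ℝ) (h1 : 0 < r₁) (h12 : r₁ ≤ r₂) :
    (∃ A₁ A₂ : Set ℝ,
      MeasurableSet A₁ ∧ MeasurableSet A₂ ∧
      A₁ ⊆ Set.Icc (r₂ - r₁) (r₂ + 3 * r₁) ∧
      A₂ ⊆ Set.Icc (0 : ℝ) (2 * r₁ + 2 * r₂) ∧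
      volume A₁ ≤ ENNReal.ofReal (2 * r₁) ∧
      volume A₂ ≤ ENNReal.ofReal (2 * r₂) ∧
      A₁ ∪ A₂ = Set.Icc (0 : ℝ) (2 * r₁ + 2 * r₂)) ∧
    (∀ (T : Finset (Fin 2)) (p : Fin 2 → ℝ),
      (∀ q ∈ Set.Icc (0 : ℝ) (2 * r₁ + 2 * r₂), ∃ i ∈ T, |q - p i| ≤ ![r₁, r₂] i) →
      ∃ i ∈ T, r₂ ≤
        Real.sqrt ((![r₁ + r₂, r₁ + r₂] i - p i) ^ 2 + (![(0 : ℝ), 0] i) ^ 2)) ∧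
    r₂ - r₁ ≤
      sInf {D : ℝ | 0 ≤ D ∧
          Feasible ![r₁ + r₂, r₁ + r₂] ![0, 0] ![r₁, r₂] (2 * r₁ + 2 * r₂) D} -
      sInf {D : ℝ | 0 ≤ D ∧
          FracCover ![r₁ + r₂, r₁ + r₂] ![0, 0] ![r₁, r₂] (2 * r₁ + 2 * r₂) D} := by
  have hunion := innerPart_union_outerPart h1 h12
  refine ⟨⟨innerPart r₁ r₂, outerPart r₁ r₂, measurableSet_Icc,
      measurableSet_Icc.union measurableSet_Icc, Icc_subset_Icc le_rfl (by linarith),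
      hunion ▸ subset_union_right, volume_innerPart, volume_outerPart h1 h12, hunion⟩,
    exists_movement_ge_of_covers h1 h12, sub_le_sub ?_ ?_⟩
  · exact le_csInf ⟨r₂, by linarith, feasible_two_sensors h1 h12⟩ fun D hD ↦
      hD.2.le_of_forall_covers (exists_movement_ge_of_covers h1 h12)
  · exact csInf_le ⟨0, fun D hD ↦ hD.1⟩ ⟨h1.le, fracCover_innerPart_outerPart h1 h12⟩
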